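/- arXiv:1101.0485 — 7 statements merged into one kernel-verified Lean document; each statement's English description precedes it below -/
import Mathlib

section
/- In the Cheng-Kac Jordan superalgebra J = JCK(Z,δ), the F-linear span of the set of products {a·b : a, b ∈ J₁} of two odd elements equals the whole even part J₀. -/
namespace CKJ

variable (F : Type*) [Field F] {Z : Type*} [CommRing Z] [Algebra F Z]

/-- Underlying module of the Cheng–Kac Jordan superalgebra `JCK(Z,δ)`:
the even part has `Z`-coordinates `1, w₁, w₂, w₃` (indices `0,1,2,3`) and the
odd part has `Z`-coordinates `x, x₁, x₂, x₃` (indices `0,1,2,3`). -/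
abbrev J (Z : Type*) := (Fin 4 → Z) × (Fin 4 → Z)

/-- The product of two even elements, in coordinates:
`w₁² = w₂² = 1`, `w₃² = -1`, `wᵢwⱼ = 0` for `i ≠ j`. -/
def emul (a c : Fin 4 → Z) : Fin 4 → Z :=
  ![a 0 * c 0 + a 1 * c 1 + a 2 * c 2 - a 3 * c 3,
    a 0 * c 1 + a 1 * c 0,
    a 0 * c 2 + a 2 * c 0,
    a 0 * c 3 + a 3 * c 0]

/-- The product of two odd elements: `(fx)(gx) = δ(f)g - fδ(g)`,
`(fxᵢ)(gx) = (fg)wᵢ`, `(fx)(gxⱼ) = -(fg)wⱼ`, `(fxᵢ)(gxⱼ) = 0`. -/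
def omul (δ : Z → Z) (b d : Fin 4 → Z) : Fin 4 → Z :=
  ![δ (b 0) * d 0 - b 0 * δ (d 0),
    b 1 * d 0 - b 0 * d 1,
    b 2 * d 0 - b 0 * d 2,
    b 3 * d 0 - b 0 * d 3]

/-- The product of an even element by an odd element: `f(gx) = (fg)x`,
`f(gxⱼ) = (fg)xⱼ`, `(fwᵢ)(gx) = (δ(f)g)xᵢ`, `(fwᵢ)(gxⱼ) = -(fg)x_{i×j}`. -/
def eomul (δ : Z → Z) (a d : Fin 4 → Z) : Fin 4 → Z :=
  ![a 0 * d 0,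
    a 0 * d 1 + δ (a 1) * d 0 + (a 2 * d 3 - a 3 * d 2),
    a 0 * d 2 + δ (a 2) * d 0 + (a 3 * d 1 - a 1 * d 3),
    a 0 * d 3 + δ (a 3) * d 0 + (a 2 * d 1 - a 1 * d 2)]

/-- The (supercommutative) multiplication of the Cheng–Kac Jordan
superalgebra `JCK(Z,δ)`. -/
def jmul (δ : Z → Z) (u v : J Z) : J Z :=
  (emul u.1 v.1 + omul δ u.2 v.2, eomul δ u.1 v.2 + eomul δ v.1 u.2)

/-- `fw f k` is the even element `f·wₖ` (with the convention `w₀ = 1`). -/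
def fw (f : Z) (k : Fin 4) : J Z := (fun j => if j = k then f else 0, 0)

/-- `fone f` is the even element `f·1`. -/
def fone (f : Z) : J Z := fw f 0

/-- `fxi f k` is the odd element `f·xₖ` (with the convention `x₀ = x`). -/
def fxi (f : Z) (k : Fin 4) : J Z := (0, fun j => if j = k then f else 0)

/-- `fx f` is the odd element `f·x`. -/
def fx (f : Z) : J Z := fxi f 0

/-- The grading involution of the superalgebra `J` (identity on the even part,
minus the identity on the odd part). -/
def jsig (u : J Z) : J Z := (u.1, -u.2)

/-- `F`-linearity of a map `J → J`. -/
def IsLin (d : J Z → J Z) : Prop :=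
  (∀ u v, d (u + v) = d u + d v) ∧ ∀ (c : F) (u), d (c • u) = c • d u

/-- `d` is an even derivation of the superalgebra `J = JCK(Z,δ)`. -/
def IsDer0 (δ : Z → Z) (d : J Z → J Z) : Prop :=
  IsLin F d ∧ (∀ u : J Z, u.2 = 0 → (d u).2 = 0) ∧ (∀ u : J Z, u.1 = 0 → (d u).1 = 0) ∧
    ∀ u v, d (jmul δ u v) = jmul δ (d u) v + jmul δ u (d v)

/-- `d` is an odd derivation of the superalgebra `J = JCK(Z,δ)`. -/
def IsDer1 (δ : Z → Z) (d : J Z → J Z) : Prop :=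
  IsLin F d ∧ (∀ u : J Z, u.2 = 0 → (d u).1 = 0) ∧ (∀ u : J Z, u.1 = 0 → (d u).2 = 0) ∧
    ∀ u v, d (jmul δ u v) = jmul δ (d u) v + jmul δ (jsig u) (d v)

/-- The set `Der(J) = Der(J)₀ ⊕ Der(J)₁` of all derivations of `J`. -/
def DerJSet (δ : Z → Z) : Set (J Z → J Z) :=
  {d | ∃ d0 d1, IsDer0 F δ d0 ∧ IsDer1 F δ d1 ∧ d = d0 + d1}

/-- `u` is homogeneous of parity `p` (`p = true` means odd). -/
def IsHom (p : Bool) (u : J Z) : Prop := if p then u.1 = 0 else u.2 = 0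

/-- `(-1)^{pq}` -/
def sgn (p q : Bool) : ℤ := if p && q then -1 else 1

/-- `Dgen δ ε u v` is the inner derivation `D(u,v) : c ↦ u(vc) - ε·v(uc)`;
for homogeneous `u`, `v` one takes `ε = (-1)^{|u||v|}`. -/
def Dgen (δ : Z → Z) (ε : ℤ) (u v : J Z) : J Z → J Z :=
  fun c => jmul δ u (jmul δ v c) - ε • jmul δ v (jmul δ u c)

/-- Generators `D(u,v)`, `u`, `v` homogeneous, of `Inder(J)`. -/
def InderSet (δ : Z → Z) : Set (J Z → J Z) :=
  {d | ∃ u v p q, IsHom p u ∧ IsHom q v ∧ d = Dgen δ (sgn p q) u v}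

/-- Generators of the even part `Inder(J)₀`. -/
def InderSet0 (δ : Z → Z) : Set (J Z → J Z) :=
  {d | ∃ u v p, IsHom p u ∧ IsHom p v ∧ d = Dgen δ (sgn p p) u v}

/-- Generators of the odd part `Inder(J)₁`. -/
def InderSet1 (δ : Z → Z) : Set (J Z → J Z) :=
  {d | ∃ u v p, IsHom p u ∧ IsHom (!p) v ∧ d = Dgen δ 1 u v}

/-- Coordinate index of each sector of the `ℤ₂×ℤ₂`-grading:
`[0,0] ↦ 0`, `[1,0] ↦ 1`, `[0,1] ↦ 2`, `[1,1] ↦ 3`. -/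
def idx (t : ZMod 2 × ZMod 2) : Fin 4 :=
  if t = (0, 0) then 0 else if t = (1, 0) then 1 else if t = (0, 1) then 2 else 3

/-- The sector `J^{[t]}` of the `ℤ₂×ℤ₂`-grading of `J`:
`J^{[0,0]} = Z ⊕ Zx`, `J^{[1,0]} = Zw₁ ⊕ Zx₁`, `J^{[0,1]} = Zw₂ ⊕ Zx₂`,
`J^{[1,1]} = Zw₃ ⊕ Zx₃`. -/
def gset (t : ZMod 2 × ZMod 2) : Set (J Z) :=
  {u | ∀ k : Fin 4, k ≠ idx t → u.1 k = 0 ∧ u.2 k = 0}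

/-- `d : J → J` has degree `t` with respect to the `ℤ₂×ℤ₂`-grading of `J`. -/
def DerDeg (t : ZMod 2 × ZMod 2) (d : J Z → J Z) : Prop :=
  ∀ s u, u ∈ gset s → d u ∈ gset (s + t)

/-! The Kantor double superalgebra of vector type `K = Z ⊕ Zx`, realised
as `Z × Z`: the pair `(f, g)` represents `f + gx`. -/

/-- The multiplication of `K = Z ⊕ Zx`. -/
def kmul (δ : Z → Z) (u v : Z × Z) : Z × Z :=
  (u.1 * v.1 + (δ u.2 * v.2 - u.2 * δ v.2), u.1 * v.2 + v.1 * u.2)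

/-- The grading involution of `K`. -/
def ksig (u : Z × Z) : Z × Z := (u.1, -u.2)

/-- `F`-linearity of a map `K → K`. -/
def IsKLin (d : Z × Z → Z × Z) : Prop :=
  (∀ u v, d (u + v) = d u + d v) ∧ ∀ (c : F) (u), d (c • u) = c • d u

/-- `d` is an even derivation of `K = Z ⊕ Zx`. -/
def IsKDer0 (δ : Z → Z) (d : Z × Z → Z × Z) : Prop :=
  IsKLin F d ∧ (∀ u : Z × Z, u.2 = 0 → (d u).2 = 0) ∧ (∀ u : Z × Z, u.1 = 0 → (d u).1 = 0) ∧
    ∀ u v, d (kmul δ u v) = kmul δ (d u) v + kmul δ u (d v)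

/-- `d` is an odd derivation of `K = Z ⊕ Zx`. -/
def IsKDer1 (δ : Z → Z) (d : Z × Z → Z × Z) : Prop :=
  IsKLin F d ∧ (∀ u : Z × Z, u.2 = 0 → (d u).1 = 0) ∧ (∀ u : Z × Z, u.1 = 0 → (d u).2 = 0) ∧
    ∀ u v, d (kmul δ u v) = kmul δ (d u) v + kmul δ (ksig u) (d v)

/-- `Dk δ ε u v` is the inner derivation `D(u,v) : c ↦ u(vc) - ε·v(uc)` of `K`. -/
def Dk (δ : Z → Z) (ε : ℤ) (u v : Z × Z) : Z × Z → Z × Z :=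
  fun c => kmul δ u (kmul δ v c) - ε • kmul δ v (kmul δ u c)

/-- `u ∈ K` is homogeneous of parity `p`. -/
def KHom (p : Bool) (u : Z × Z) : Prop := if p then u.1 = 0 else u.2 = 0

/-- Generators `D(u,v)`, `u`, `v` homogeneous, of `Inder(K)`. -/
def InderKSet (δ : Z → Z) : Set (Z × Z → Z × Z) :=
  {d | ∃ u v p q, KHom p u ∧ KHom q v ∧ d = Dk δ (sgn p q) u v}

/-- Generators of the even part `Inder(K)₀`. -/
def InderKSet0 (δ : Z → Z) : Set (Z × Z → Z × Z) :=
  {d | ∃ u v p, KHom p u ∧ KHom p v ∧ d = Dk δ (sgn p p) u v}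

/-- Generators of the odd part `Inder(K)₁`. -/
def InderKSet1 (δ : Z → Z) : Set (Z × Z → Z × Z) :=
  {d | ∃ u v p, KHom p u ∧ KHom (!p) v ∧ d = Dk δ 1 u v}

/-- The odd derivation `η_a` of `K`: `η_a(f) = 0`, `η_a(fx) = fa`. -/
def keta (a : Z) : Z × Z → Z × Z := fun u => (a * u.2, 0)

/-- `kcheck μ a` is the even map `μ̌` of `K` with `μ̌(f) = μ(f)` and
`μ̌(gx) = (μ(g) + ag)x`. -/
def kcheck (μ : Z → Z) (a : Z) : Z × Z → Z × Z := fun u => (μ u.1, μ u.2 + a * u.2)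

/-- The odd map `(aδ)⁻` of `K` (relevant in characteristic 3):
`(aδ)⁻(f) = (aδ(f))x`, `(aδ)⁻(fx) = δ(aδ(f))`. -/
def kminus (δ : Z → Z) (a : Z) : Z × Z → Z × Z := fun u => (δ (a * δ u.2), a * δ u.1)

/-- `D̄er(K) = Der(K)₀ ⊕ {η_a : a ∈ Z}`. -/
def DerbarK (δ : Z → Z) : Set (Z × Z → Z × Z) :=
  {e | ∃ e0 a, IsKDer0 F δ e0 ∧ e = e0 + keta a}

/-- The extension `∂̃` to `J` of the even derivation `∂ = μ̌ = kcheck μ a`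
of `K`: `∂̃|_K = ∂`, `∂̃(fwᵢ) = μ(f)wᵢ`, `∂̃(fxᵢ) = (μ(f) - af)xᵢ`. -/
def jtilde (μ : Z → Z) (a : Z) : J Z → J Z :=
  fun u => (fun k => μ (u.1 k),
    fun k => if k = 0 then μ (u.2 0) + a * u.2 0 else μ (u.2 k) - a * u.2 k)

/-- The odd derivation `η̃_a` of `J`: `η̃_a(Z) = 0`, `η̃_a(x) = a`,
`η̃_a(xⱼ) = 0` (hence `η̃_a(fwᵢ) = -(af)xᵢ`). -/
def jeta (a : Z) : J Z → J Z :=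
  fun u => (fun k => if k = 0 then a * u.2 0 else 0,
            fun k => if k = 0 then 0 else -(a * u.1 k))

/-- The even component of an endomorphism of `J`. -/
def evp (X : J Z → J Z) : J Z → J Z := fun u => (2 : F)⁻¹ • (X u + jsig (X (jsig u)))

/-- The odd component of an endomorphism of `J`. -/
def odp (X : J Z → J Z) : J Z → J Z := fun u => (2 : F)⁻¹ • (X u - jsig (X (jsig u)))

/-- The supercommutator `[X,Y]` in `End_F(J)`. -/
def sbr (X Y : J Z → J Z) : J Z → J Z :=
  X ∘ Y - Y ∘ X + (2 : F) • (odp F Y ∘ odp F X)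

/-- The odd component of an endomorphism of `K`. -/
def kodp (e : Z × Z → Z × Z) : Z × Z → Z × Z :=
  fun u => (2 : F)⁻¹ • (e u - ksig (e (ksig u)))

/-- The supercommutator `[e,e']` in `End_F(K)`. -/
def ksbr (e e' : Z × Z → Z × Z) : Z × Z → Z × Z :=
  e ∘ e' - e' ∘ e + (2 : F) • (kodp F e' ∘ kodp F e)

/-- The automorphism `τ₁ = (12)(34)`: identity on `J^{[0,0]} ⊕ J^{[1,1]}`,
`-1` on `J^{[1,0]} ⊕ J^{[0,1]}`. -/
def tau1Map : J Z → J Z :=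
  fun u => (![u.1 0, -u.1 1, -u.1 2, u.1 3], ![u.2 0, -u.2 1, -u.2 2, u.2 3])

/-- The automorphism `τ₂ = (23)(41)`: identity on `J^{[0,0]} ⊕ J^{[1,0]}`,
`-1` on `J^{[0,1]} ⊕ J^{[1,1]}`. -/
def tau2Map : J Z → J Z :=
  fun u => (![u.1 0, u.1 1, -u.1 2, -u.1 3], ![u.2 0, u.2 1, -u.2 2, -u.2 3])

/-- The automorphism `φ = (123)`: the `Z`-linear map with `φ(vⱼ) = vⱼ₊₁`,
`φ(yⱼ) = yⱼ₊₁` (indices mod 3), `φ(1) = 1`, `φ(y) = y`, where `v₁ = i·w₁`,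
`v₂ = i·w₂`, `v₃ = w₃`, `y = x`, `y₁ = i·x₁`, `y₂ = i·x₂`, `y₃ = x₃`.
In the `w`/`x` coordinates: `w₁ ↦ w₂ ↦ -i·w₃`, `w₃ ↦ i·w₁`,
`x₁ ↦ x₂ ↦ -i·x₃`, `x₃ ↦ i·x₁`. -/
def phiMap (i : F) : J Z → J Z :=
  fun u => (![u.1 0, algebraMap F Z i * u.1 3, u.1 1, -(algebraMap F Z i * u.1 2)],
            ![u.2 0, algebraMap F Z i * u.2 3, u.2 1, -(algebraMap F Z i * u.2 2)])

/-- The automorphism `τ = (12)`: `Z`-linear with `τ(1) = 1`, `τ(y) = y`,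
`τ(v₁) = -v₂`, `τ(v₂) = -v₁`, `τ(v₃) = -v₃`, `τ(y₁) = -y₂`, `τ(y₂) = -y₁`,
`τ(y₃) = -y₃`. -/
def tauMap : J Z → J Z :=
  fun u => (![u.1 0, -u.1 2, -u.1 1, -u.1 3], ![u.2 0, -u.2 2, -u.2 1, -u.2 3])

/-- `g` is an `F`-algebra automorphism of `J = JCK(Z,δ)`. -/
def IsJAut (δ : Z → Z) (g : J Z → J Z) : Prop :=
  IsLin F g ∧ Function.Bijective g ∧ ∀ u v, g (jmul δ u v) = jmul δ (g u) (g v)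

/-- The coordinatization map `Φ : K → Der(J)^{[1,1]}`,
`Φ(f + gy) = D(v₁, f·v₂) + i·D(v₃, g·y)`. -/
def Phi (δ : Z → Z) (i : F) (p : Z × Z) : J Z → J Z :=
  Dgen δ 1 (fw (algebraMap F Z i) 1) (fw (p.1 * algebraMap F Z i) 2) +
    i • Dgen δ 1 (fw (1 : Z) 3) (fx p.2)

/-- `ι₁(z) = φ ∘ Φ(z) ∘ φ⁻¹`, `ι₂(z) = φ² ∘ Φ(z) ∘ φ⁻²`, `ι₃(z) = Φ(z)`
(indexed here by `j = 0, 1, 2` respectively; note `φ⁻¹ = φ²`). -/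
def iot (δ : Z → Z) (i : F) (j : Fin 3) (z : Z × Z) : J Z → J Z :=
  if j = 0 then phiMap F i ∘ Phi F δ i z ∘ (phiMap F i ∘ phiMap F i)
  else if j = 1 then (phiMap F i ∘ phiMap F i) ∘ Phi F δ i z ∘ phiMap F i
  else Phi F δ i z

/-- The embedding `K = Z ⊕ Zx ⊆ J`. -/
def kap : Z × Z → J Z :=
  fun p => (fun j => if j = 0 then p.1 else 0, fun j => if j = 0 then p.2 else 0)

/-- The projection `J → K` onto the `Z ⊕ Zx` coordinates. -/
def pik : J Z → Z × Z := fun u => (u.1 0, u.2 0)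

end CKJ

/-! The products of odd elements are even, and `(z xₖ)(x) = z wₖ` for `k = 1, 2, 3`.
For the component along `1`, the Leibniz rule gives `(gx)(fx) + (gf x)(x) = 2 f δ(g)`;
as `2` is invertible, every `f δ(g)`, hence all of `Z = Z δ(Z)`, lies in the span. -/

namespace CKJ

variable {Z : Type*} [CommRing Z]

def oddProducts (δ : Z → Z) : Set (J Z) :=
  {u | ∃ b d : Fin 4 → Z, u = jmul δ ((0 : Fin 4 → Z), b) ((0 : Fin 4 → Z), d)}

theorem even_eq_sum_fw (a : Fin 4 → Z) : ((a, 0) : J Z) = ∑ k, fw (a k) k := by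
  ext j <;> fin_cases j <;> simp [Fin.sum_univ_four, fw]

section Derivation

variable (R : Type*) [CommRing R] [Algebra R Z]

def fwₗ (k : Fin 4) : Z →ₗ[R] J Z where
  toFun f := fw f k
  map_add' f g := by ext j <;> simp [fw, apply_ite₂ (· + ·)]
  map_smul' c f := by ext j <;> simp [fw, smul_ite]

variable {R} (δ : Derivation R Z Z)

theorem jmul_odd_odd (b d : Fin 4 → Z) :
    jmul δ ((0 : Fin 4 → Z), b) ((0 : Fin 4 → Z), d) = (omul δ b d, 0) := by
  ext j <;> fin_cases j <;> simp [jmul, emul, eomul, omul]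

theorem oddProducts_subset_even : oddProducts δ ⊆ {u | u.2 = 0} := by
  rintro _ ⟨b, d, rfl⟩
  simp [jmul_odd_odd]

theorem jmul_fxi_fx_one {k : Fin 4} (hk : k ≠ 0) (z : Z) : jmul δ (fxi z k) (fx 1) = fw z k := by
  ext j <;> fin_cases j <;> fin_cases k <;> simp_all [jmul, emul, eomul, omul, fxi, fx, fw]

theorem jmul_fx_fx_add_jmul_fx_one (f g : Z) :
    jmul δ (fx g) (fx f) + jmul δ (fx (g * f)) (fx 1) = fw (2 * (f * δ g)) 0 := by
  ext j <;> fin_cases j <;> simp [jmul, emul, eomul, omul, fx, fxi, fw, Derivation.leibniz]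
  ring

end Derivation

section Span

variable {F : Type*} [Field F] [Algebra F Z] (δ : Derivation F Z Z)

theorem fw_mul_derivation_mem_span (h2 : (2 : F) ≠ 0) (f g : Z) :
    fw (f * δ g) 0 ∈ Submodule.span F (oddProducts δ) := by
  have h : (2 : F) • fw (f * δ g) 0 = jmul δ (fx g) (fx f) + jmul δ (fx (g * f)) (fx 1) := by
    rw [jmul_fx_fx_add_jmul_fx_one, two_smul, two_mul]
    exact ((fwₗ F 0).map_add _ _).symm
  refine (Submodule.smul_mem_iff _ h2).mp ?_
  rw [h]
  exact Submodule.add_mem _ (Submodule.subset_span ⟨_, _, rfl⟩)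
    (Submodule.subset_span ⟨_, _, rfl⟩)

theorem fw_mem_span (h2 : (2 : F) ≠ 0)
    (hspan : Submodule.span F {z : Z | ∃ f g : Z, z = f * δ g} = ⊤) (z : Z) (k : Fin 4) :
    fw z k ∈ Submodule.span F (oddProducts δ) := by
  by_cases hk : k = 0
  · subst hk
    have hle : Submodule.span F {z : Z | ∃ f g : Z, z = f * δ g} ≤
        (Submodule.span F (oddProducts δ)).comap (fwₗ F 0) :=
      Submodule.span_le.mpr fun _ ⟨f, g, hz⟩ => hz ▸ fw_mul_derivation_mem_span δ h2 f g
    exact hle (hspan ▸ Submodule.mem_top)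
  · exact Submodule.subset_span ⟨_, _, (jmul_fxi_fx_one δ hk z).symm⟩

end Span

end CKJ

open CKJ
theorem stmt1 {F : Type*} [Field F] (h2 : (2 : F) ≠ 0) {Z : Type*} [CommRing Z] [Algebra F Z]
    (δ : Derivation F Z Z)
    (hspan : Submodule.span F {z : Z | ∃ f g : Z, z = f * δ g} = ⊤) :
    Submodule.span F {u : J Z | ∃ b d : Fin 4 → Z,
        u = jmul (⇑δ) ((0 : Fin 4 → Z), b) ((0 : Fin 4 → Z), d)}
      = (⊤ : Submodule F (Fin 4 → Z)).prod (⊥ : Submodule F (Fin 4 → Z)) := by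
  change Submodule.span F (oddProducts δ) = _
  apply le_antisymm
  · refine Submodule.span_le.mpr fun u hu => ?_
    exact Submodule.mem_prod.mpr ⟨Submodule.mem_top, oddProducts_subset_even δ hu⟩
  · rintro ⟨a, b⟩ ⟨-, hb⟩
    obtain rfl : b = 0 := hb
    rw [even_eq_sum_fw]
    exact Submodule.sum_mem _ fun k _ => fw_mem_span δ h2 hspan (a k) k
end

section
/- In the Cheng-Kac Jordan superalgebra J = JCK(Z,δ), the set of elements z ∈ J satisfying z·w₁ = z·w₂ = z·w₃ = 0 is exactly the submodule Zx. -/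
open CKJ
theorem stmt3 {F : Type*} [Field F] (h2 : (2 : F) ≠ 0) {Z : Type*} [CommRing Z] [Algebra F Z]
    (δ : Derivation F Z Z)
    (hspan : Submodule.span F {z : Z | ∃ f g : Z, z = f * δ g} = ⊤) :
    {z : J Z | ∀ k : Fin 4, k ≠ 0 → jmul (⇑δ) z (fw (1 : Z) k) = 0}
      = {z : J Z | ∃ f : Z, z = fx f} := by
  ext z
  simp only [Set.mem_setOf_eq]
  constructor
  · intro h
    have h1 := h 1 (by decide)
    have h2' := h 2 (by decide)
    have h3 := h 3 (by decide)
    simp only [jmul, emul, omul, eomul, fw, fx, fxi, Prod.ext_iff, funext_iff,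
      Fin.forall_fin_succ, Fin.isValue, Prod.fst_zero, Prod.snd_zero,
      Matrix.cons_val_zero, Matrix.cons_val_one, Matrix.head_cons] at h1 h2' h3
    simp only [Fin.ext_iff] at h1 h2' h3
    simp +decide at h1 h2' h3
    refine ⟨z.2 0, ?_⟩
    refine Prod.ext ?_ ?_ <;> funext k <;> fin_cases k <;>
      simp_all +decide [fx, fxi]
  · rintro ⟨f, rfl⟩
    intro k hk
    fin_cases k
    · exact absurd rfl hk
    all_goals
      simp +decide [jmul, emul, omul, eomul, fw, fx, fxi, Prod.ext_iff, funext_iff,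
        Fin.forall_fin_succ]
end

section
/- Let μ be an F-linear derivation of Z such that [μ,δ] = μδ − δμ = 2aδ for some a ∈ Z. Then there is a unique even derivation μ̌ of the Kantor double superalgebra K = Z ⊕ Zx with μ̌|_Z = μ and μ̌(x) = ax (so μ̌(fx) = (μ(f) + af)x for f ∈ Z). Conversely, for every even derivation γ of K, the restriction μ = γ|_Z is a derivation of Z with [μ,δ] ∈ Zδ and γ = μ̌. Moreover, the assignment μ ↦ μ̌ is an isomorphism of Lie algebras from {μ ∈ Der_F(Z) : [μ,δ] ∈ Zδ} onto Der(K)₀. -/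
/-! An even derivation `d` of `K` preserves `Z` and `Zx`, and since `gx = g · x` it is
determined by `μ = d|_Z` and `d(x) = ax`: it is `μ̌`. Testing the derivation rule on
`(fx) · x = δ(f)` shows that `μ̌` is a derivation exactly when `[μ, δ] = 2aδ`. The bracket of
`μ̌` (built from `a`) and `ν̌` (built from `b`) is `[μ, ν]ˇ` built from `μ(b) - ν(a)`, by direct
computation. -/

namespace CKJ

variable {F : Type*} [Field F] {Z : Type*} [CommRing Z] [Algebra F Z]

section kcheck

theorem kcheck_add (μ ν : Z → Z) (a b : Z) :
    kcheck (fun f => μ f + ν f) (a + b) = kcheck μ a + kcheck ν b := by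
  funext u
  refine Prod.ext rfl ?_
  simp only [kcheck, Pi.add_apply, Prod.snd_add]
  ring

theorem kcheck_smul (c : F) (μ : Z → Z) (a : Z) :
    kcheck (fun f => c • μ f) (c • a) = c • kcheck μ a := by
  funext u
  simp [kcheck, smul_add]

variable {R : Type*} [CommSemiring R] [Algebra R Z]

theorem kcheck_injective {μ ν : Derivation R Z Z} {a b : Z}
    (h : kcheck μ a = kcheck ν b) : μ = ν ∧ a = b := by
  refine ⟨Derivation.ext fun f => ?_, ?_⟩
  · simpa [kcheck] using congrArg Prod.fst (congrFun h (f, 0))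
  · simpa [kcheck] using congrArg Prod.snd (congrFun h (0, 1))

theorem kcheck_comp_sub_comp (μ ν : Derivation R Z Z) (a b : Z) :
    kcheck μ a ∘ kcheck ν b - kcheck ν b ∘ kcheck μ a
      = kcheck (fun f => μ (ν f) - ν (μ f)) (μ b - ν a) := by
  funext u
  simp only [kcheck, Function.comp, Pi.sub_apply, map_add, Derivation.leibniz, smul_eq_mul,
    Prod.mk_sub_mk, Prod.mk.injEq]
  exact ⟨trivial, by ring⟩

end kcheck

variable (δ μ : Derivation F Z Z) (a : Z)

theorem commutator_of_isKDer0_kcheck (h : IsKDer0 F δ (kcheck μ a)) (f : Z) :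
    μ (δ f) - δ (μ f) = 2 * a * δ f := by
  have key := congrArg Prod.fst (h.2.2.2 (0, f) (0, 1))
  simp [kcheck, kmul] at key
  linear_combination key

theorem isKDer0_kcheck_of_commutator (hμ : ∀ f, μ (δ f) - δ (μ f) = 2 * a * δ f) :
    IsKDer0 F δ (kcheck μ a) := by
  refine ⟨⟨fun u v => ?_, fun c u => ?_⟩, fun u h => by simp [kcheck, h],
    fun u h => by simp [kcheck, h], fun u v => ?_⟩
  · simp only [kcheck, Prod.fst_add, Prod.snd_add, map_add, Prod.mk_add_mk, Prod.mk.injEq]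
    exact ⟨trivial, by ring⟩
  · ext <;> simp [kcheck]
  · simp only [kcheck, kmul, Prod.mk_add_mk, Prod.mk.injEq, map_add, map_sub,
      Derivation.leibniz, smul_eq_mul]
    exact ⟨by linear_combination v.2 * hμ u.2 - u.2 * hμ v.2, by ring⟩

theorem isKDer0_kcheck_iff :
    IsKDer0 F δ (kcheck μ a) ↔ ∀ f, μ (δ f) - δ (μ f) = 2 * a * δ f :=
  ⟨commutator_of_isKDer0_kcheck δ μ a, isKDer0_kcheck_of_commutator δ μ a⟩

namespace IsKDer0

variable {δ} {d : Z × Z → Z × Z} (hd : IsKDer0 F δ d)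
include hd

theorem apply_even (f : Z) : d (f, 0) = ((d (f, 0)).1, 0) :=
  Prod.ext rfl (hd.2.1 _ rfl)

theorem apply_odd (g : Z) : d (0, g) = (0, (d (g, 0)).1 + g * (d (0, 1)).2) := by
  have key := hd.2.2.2 (g, 0) (0, 1)
  have hx : d (0, 1) = (0, (d (0, 1)).2) := Prod.ext (hd.2.2.1 _ rfl) rfl
  simp only [kmul, mul_zero, map_zero, zero_mul, mul_one, sub_self, add_zero] at key
  rw [key, hd.apply_even, hx]
  simp

theorem eq_kcheck : d = kcheck (fun f => (d (f, 0)).1) (d (0, 1)).2 := by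
  funext u
  have hu : u = (u.1, 0) + (0, u.2) := by simp
  rw [hu, hd.1.1, hd.apply_even, hd.apply_odd]
  simp [kcheck, mul_comm]

def restrict : Derivation F Z Z :=
  Derivation.mk' ⟨⟨fun f => (d (f, 0)).1, fun f g => by
      simpa using congrArg Prod.fst (hd.1.1 (f, 0) (g, 0))⟩,
    fun c f => by simpa using congrArg Prod.fst (hd.1.2 c (f, 0))⟩
    fun f g => by
      have key := congrArg Prod.fst (hd.2.2.2 (f, 0) (g, 0))
      rw [hd.apply_even f, hd.apply_even g] at key
      simp [kmul] at key ⊢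
      linear_combination key

@[simp]
theorem restrict_apply (f : Z) : hd.restrict f = (d (f, 0)).1 := rfl

theorem eq_kcheck_restrict : d = kcheck hd.restrict (d (0, 1)).2 :=
  hd.eq_kcheck

theorem eq_kcheck_of_apply {μ : Z → Z} {a : Z} (hres : ∀ f, d (f, 0) = (μ f, 0))
    (hx : d (0, 1) = (0, a)) : d = kcheck μ a := by
  rw [hd.eq_kcheck]
  simp only [hres, hx]

end IsKDer0

end CKJ

open CKJ
theorem stmt4_general {F : Type*} [Field F] {Z : Type*} [CommRing Z] [Algebra F Z]
    (δ : Derivation F Z Z) :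
    -- `μ̌ = kcheck μ a` is the unique even derivation of `K = Z ⊕ Zx`
    -- restricting to `μ` on `Z` and sending `x` to `ax`
    (∀ (μ : Derivation F Z Z) (a : Z), (∀ f, μ (δ f) - δ (μ f) = 2 * a * δ f) →
      (IsKDer0 F (⇑δ) (kcheck (⇑μ) a) ∧
       (∀ f : Z, kcheck (⇑μ) a (f, 0) = (μ f, 0)) ∧
       kcheck (⇑μ) a ((0 : Z), (1 : Z)) = ((0 : Z), a) ∧
       ∀ d : Z × Z → Z × Z, IsKDer0 F (⇑δ) d → (∀ f : Z, d (f, 0) = (μ f, 0)) →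
         d ((0 : Z), (1 : Z)) = ((0 : Z), a) → d = kcheck (⇑μ) a)) ∧
    -- conversely, every even derivation of `K` is of this form
    (∀ d : Z × Z → Z × Z, IsKDer0 F (⇑δ) d →
      ∃ (μ : Derivation F Z Z) (a : Z), (∀ f, μ (δ f) - δ (μ f) = 2 * a * δ f) ∧
        d = kcheck (⇑μ) a) ∧
    -- the assignment `μ ↦ μ̌` is injective
    (∀ (μ ν : Derivation F Z Z) (a b : Z),
      kcheck (⇑μ) a = kcheck (⇑ν) b → μ = ν ∧ a = b) ∧
    -- it is linear
    (∀ (μ ν : Derivation F Z Z) (a b : Z),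
      kcheck (fun f => μ f + ν f) (a + b) = kcheck (⇑μ) a + kcheck (⇑ν) b) ∧
    (∀ (c : F) (μ : Derivation F Z Z) (a : Z),
      kcheck (fun f => c • μ f) (c • a) = c • kcheck (⇑μ) a) ∧
    -- and it preserves the Lie bracket
    (∀ (μ ν : Derivation F Z Z) (a b : Z),
      (∀ f, μ (δ f) - δ (μ f) = 2 * a * δ f) → (∀ f, ν (δ f) - δ (ν f) = 2 * b * δ f) →
      kcheck (⇑μ) a ∘ kcheck (⇑ν) b - kcheck (⇑ν) b ∘ kcheck (⇑μ) a
        = kcheck (fun f => μ (ν f) - ν (μ f)) (μ b - ν a)) := by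
  refine ⟨fun μ a hμ => ⟨isKDer0_kcheck_of_commutator δ μ a hμ, fun f => by simp [kcheck],
    by simp [kcheck], fun d hd hres hx => hd.eq_kcheck_of_apply hres hx⟩,
    fun d hd => ⟨hd.restrict, (d (0, 1)).2, ?_, hd.eq_kcheck_restrict⟩,
    fun μ ν a b h => kcheck_injective h, fun μ ν a b => kcheck_add μ ν a b,
    fun c μ a => kcheck_smul c μ a, fun μ ν a b _ _ => kcheck_comp_sub_comp μ ν a b⟩
  rw [← isKDer0_kcheck_iff, ← hd.eq_kcheck_restrict]
  exact hd

theorem stmt4 {F : Type*} [Field F] (h2 : (2 : F) ≠ 0) {Z : Type*} [CommRing Z] [Algebra F Z]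
    (δ : Derivation F Z Z)
    (hspan : Submodule.span F {z : Z | ∃ f g : Z, z = f * δ g} = ⊤) :
    -- `μ̌ = kcheck μ a` is the unique even derivation of `K = Z ⊕ Zx`
    -- restricting to `μ` on `Z` and sending `x` to `ax`
    (∀ (μ : Derivation F Z Z) (a : Z), (∀ f, μ (δ f) - δ (μ f) = 2 * a * δ f) →
      (IsKDer0 F (⇑δ) (kcheck (⇑μ) a) ∧
       (∀ f : Z, kcheck (⇑μ) a (f, 0) = (μ f, 0)) ∧
       kcheck (⇑μ) a ((0 : Z), (1 : Z)) = ((0 : Z), a) ∧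
       ∀ d : Z × Z → Z × Z, IsKDer0 F (⇑δ) d → (∀ f : Z, d (f, 0) = (μ f, 0)) →
         d ((0 : Z), (1 : Z)) = ((0 : Z), a) → d = kcheck (⇑μ) a)) ∧
    -- conversely, every even derivation of `K` is of this form
    (∀ d : Z × Z → Z × Z, IsKDer0 F (⇑δ) d →
      ∃ (μ : Derivation F Z Z) (a : Z), (∀ f, μ (δ f) - δ (μ f) = 2 * a * δ f) ∧
        d = kcheck (⇑μ) a) ∧
    -- the assignment `μ ↦ μ̌` is injective
    (∀ (μ ν : Derivation F Z Z) (a b : Z),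
      kcheck (⇑μ) a = kcheck (⇑ν) b → μ = ν ∧ a = b) ∧
    -- it is linear
    (∀ (μ ν : Derivation F Z Z) (a b : Z),
      kcheck (fun f => μ f + ν f) (a + b) = kcheck (⇑μ) a + kcheck (⇑ν) b) ∧
    (∀ (c : F) (μ : Derivation F Z Z) (a : Z),
      kcheck (fun f => c • μ f) (c • a) = c • kcheck (⇑μ) a) ∧
    -- and it preserves the Lie bracket
    (∀ (μ ν : Derivation F Z Z) (a b : Z),
      (∀ f, μ (δ f) - δ (μ f) = 2 * a * δ f) → (∀ f, ν (δ f) - δ (ν f) = 2 * b * δ f) →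
      kcheck (⇑μ) a ∘ kcheck (⇑ν) b - kcheck (⇑ν) b ∘ kcheck (⇑μ) a
        = kcheck (fun f => μ (ν f) - ν (μ f)) (μ b - ν a)) :=
  stmt4_general δ
end

section
/- In the Kantor double superalgebra K = Z ⊕ Zx: for all f, g ∈ Z the inner derivation D(fx, gx) equals −2·(fgδ)ˇ, the even derivation of K acting on Z as −2fgδ and sending x to δ(fg)x. Consequently Inder(K)₀ = {(aδ)ˇ : a ∈ Z}, and the map Z → Inder(K)₀, a ↦ (aδ)ˇ, is an F-linear bijection; in particular dim_F Inder(K)₀ = dim_F Z. -/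
open CKJ

section Aux

variable {F : Type*} [Field F] {Z : Type*} [CommRing Z] [Algebra F Z]

/-- The linear map `a ↦ (aδ)ˇ`. -/
noncomputable def Lmap (δ : Derivation F Z Z) : Z →ₗ[F] ((Z × Z) → (Z × Z)) where
  toFun a := kcheck (fun h => a * δ h) ((2 : F)⁻¹ • (-(δ a) : Z))
  map_add' a b := by
    funext u
    simp only [kcheck, map_add, Pi.add_apply, Prod.mk_add_mk, Prod.mk.injEq]
    refine ⟨by ring, ?_⟩
    rw [neg_add, smul_add]
    ring
  map_smul' c a := by
    funext u
    simp only [kcheck, map_smul, RingHom.id_apply, Pi.smul_apply, Prod.smul_mk,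
      Prod.mk.injEq]
    refine ⟨smul_mul_assoc c a (δ u.1), ?_⟩
    rw [δ.map_smul, ← smul_neg c, smul_comm ((2 : F)⁻¹) c, smul_mul_assoc, smul_mul_assoc,
      smul_add]

lemma Lapp (δ : Derivation F Z Z) (a : Z) :
    Lmap δ a = kcheck (fun h => a * δ h) ((2 : F)⁻¹ • (-(δ a) : Z)) := rfl

lemma halfsmul (h2 : (2 : F) ≠ 0) (z : Z) : (2 : F)⁻¹ • ((2 : Z) * z) = z := by
  rw [show ((2 : Z)) = algebraMap F Z 2 from (map_ofNat _ 2).symm, ← Algebra.smul_def,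
    smul_smul, inv_mul_cancel₀ h2, one_smul]

lemma halfsmul' (h2 : (2 : F) ≠ 0) (z : Z) : (2 : Z) * ((2 : F)⁻¹ • z) = z := by
  rw [mul_smul_comm, halfsmul h2]

lemma part1 (δ : Derivation F Z Z) (f g : Z) :
    Dk (⇑δ) (-1) ((0 : Z), f) ((0 : Z), g)
      = kcheck (fun h => -(2 * (f * g)) * δ h) (δ (f * g)) := by
  funext c
  obtain ⟨c1, c2⟩ := c
  simp [Dk, kmul, kcheck, Derivation.leibniz, smul_eq_mul, Prod.ext_iff]
  constructor <;> ring

lemma Lval (h2 : (2 : F) ≠ 0) (δ : Derivation F Z Z) (f g : Z) :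
    Lmap δ (-(2 * (f * g))) = kcheck (fun h => -(2 * (f * g)) * δ h) (δ (f * g)) := by
  have hδ : δ (-(2 * (f * g))) = -((2 : Z) * δ (f * g)) := by
    rw [map_neg]
    congr 1
    rw [two_mul, map_add, ← two_mul]
  rw [Lapp, hδ, neg_neg, halfsmul h2]

lemma genmem (h2 : (2 : F) ≠ 0) (δ : Derivation F Z Z) (f g : Z) :
    Lmap δ (-(2 * (f * g))) ∈ InderKSet0 (⇑δ) := by
  refine ⟨((0 : Z), f), ((0 : Z), g), true, rfl, rfl, ?_⟩
  rw [Lval h2 δ f g, ← part1 δ f g]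
  rfl

lemma span_eq_range (h2 : (2 : F) ≠ 0) (δ : Derivation F Z Z)
    (hspan : Submodule.span F {z : Z | ∃ f g : Z, z = f * δ g} = ⊤) :
    Submodule.span F (InderKSet0 (⇑δ)) = LinearMap.range (Lmap δ) := by
  apply le_antisymm
  · rw [Submodule.span_le]
    rintro d ⟨u, v, p, hu, hv, rfl⟩
    cases p with
    | true =>
      obtain ⟨u1, u2⟩ := u
      obtain ⟨v1, v2⟩ := v
      simp only [KHom, if_true] at hu hv
      subst hu; subst hv
      refine ⟨-(2 * (u2 * v2)), ?_⟩
      rw [Lval h2 δ u2 v2, ← part1 δ u2 v2]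
      rfl
    | false =>
      obtain ⟨u1, u2⟩ := u
      obtain ⟨v1, v2⟩ := v
      simp only [KHom, if_false] at hu hv
      subst hu; subst hv
      refine ⟨0, ?_⟩
      funext c
      obtain ⟨c1, c2⟩ := c
      simp only [Lapp, kcheck, map_zero, zero_mul, smul_zero, neg_zero, Dk, kmul, sgn]
      norm_num
      rw [show u1 * (v1 * c1) - v1 * (u1 * c1) = 0 from by ring,
        show u1 * (v1 * c2) - v1 * (u1 * c2) = 0 from by ring]
      rfl
  · rintro _ ⟨a, rfl⟩
    have key : Submodule.span F {z : Z | ∃ f g : Z, z = f * δ g} ≤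
        (Submodule.span F (InderKSet0 (⇑δ))).comap (Lmap δ) := by
      rw [Submodule.span_le]
      rintro z ⟨f, g, rfl⟩
      have h1 : Lmap δ (-(2 * (f * δ g))) ∈ Submodule.span F (InderKSet0 (⇑δ)) :=
        Submodule.subset_span (genmem h2 δ f (δ g))
      have h3 : Lmap δ (f * δ g) = (-(2 : F)⁻¹) • Lmap δ (-(2 * (f * δ g))) := by
        rw [← map_smul]
        congr 1
        rw [smul_neg, neg_smul, neg_neg, halfsmul h2]
      simp only [SetLike.mem_coe, Submodule.mem_comap]
      rw [h3]
      exact Submodule.smul_mem _ _ h1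
    have ha : a ∈ Submodule.span F {z : Z | ∃ f g : Z, z = f * δ g} := by
      rw [hspan]; exact Submodule.mem_top
    exact key ha

lemma range_set (h2 : (2 : F) ≠ 0) (δ : Derivation F Z Z) :
    (LinearMap.range (Lmap δ) : Set (Z × Z → Z × Z))
      = {d | ∃ a a' : Z, 2 * a' = -δ a ∧ d = kcheck (fun h => a * δ h) a'} := by
  ext d
  constructor
  · rintro ⟨a, rfl⟩
    exact ⟨a, (2 : F)⁻¹ • (-(δ a) : Z), halfsmul' h2 _, rfl⟩
  · rintro ⟨a, a', ha, rfl⟩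
    refine ⟨a, ?_⟩
    rw [Lapp, ← ha, halfsmul h2]

lemma Linj (h2 : (2 : F) ≠ 0) (δ : Derivation F Z Z)
    (hspan : Submodule.span F {z : Z | ∃ f g : Z, z = f * δ g} = ⊤) :
    Function.Injective (Lmap δ) := by
  intro a b hab
  have hmul : ∀ h : Z, a * δ h = b * δ h := by
    intro h
    have h1 : (Lmap δ a (h, 0)).1 = (Lmap δ b (h, 0)).1 := by rw [hab]
    simpa [Lapp, kcheck] using h1
  have hM : Submodule.span F {z : Z | ∃ f g : Z, z = f * δ g} ≤
      LinearMap.ker (LinearMap.mulLeft F (a - b)) := by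
    rw [Submodule.span_le]
    rintro z ⟨f, g, rfl⟩
    simp only [SetLike.mem_coe, LinearMap.mem_ker, LinearMap.mulLeft_apply]
    calc (a - b) * (f * δ g) = (a * δ g - b * δ g) * f := by ring
    _ = 0 := by rw [hmul g, sub_self, zero_mul]
  have h1 : (1 : Z) ∈ Submodule.span F {z : Z | ∃ f g : Z, z = f * δ g} := by
    rw [hspan]; exact Submodule.mem_top
  have h0 : (a - b) * 1 = 0 := hM h1
  rw [mul_one, sub_eq_zero] at h0
  exact h0

end Aux

theorem stmt5 {F : Type*} [Field F] (h2 : (2 : F) ≠ 0) {Z : Type*} [CommRing Z] [Algebra F Z]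
    (δ : Derivation F Z Z)
    (hspan : Submodule.span F {z : Z | ∃ f g : Z, z = f * δ g} = ⊤) :
    -- `D(fx, gx) = -2·(fgδ)ˇ`
    (∀ f g : Z, Dk (⇑δ) (-1) ((0 : Z), f) ((0 : Z), g)
        = kcheck (fun h => -(2 * (f * g)) * δ h) (δ (f * g))) ∧
    -- `Inder(K)₀ = {(aδ)ˇ : a ∈ Z}`
    ((Submodule.span F (InderKSet0 (⇑δ)) : Set (Z × Z → Z × Z))
        = {d | ∃ a a' : Z, 2 * a' = -δ a ∧ d = kcheck (fun h => a * δ h) a'}) ∧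
    -- `a ↦ (aδ)ˇ` is injective (hence an `F`-linear bijection onto `Inder(K)₀`)
    Function.Injective (fun a : Z =>
      kcheck (fun h => a * δ h) ((2 : F)⁻¹ • (-(δ a) : Z))) ∧
    (∀ a b : Z, kcheck (fun h => (a + b) * δ h) ((2 : F)⁻¹ • (-(δ (a + b)) : Z))
        = kcheck (fun h => a * δ h) ((2 : F)⁻¹ • (-(δ a) : Z))
          + kcheck (fun h => b * δ h) ((2 : F)⁻¹ • (-(δ b) : Z))) ∧
    -- in particular `dim_F Inder(K)₀ = dim_F Z`
    Module.rank F ↥(Submodule.span F (InderKSet0 (⇑δ))) = Module.rank F Z := by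
  have hsr := span_eq_range h2 δ hspan
  refine ⟨part1 δ, ?_, Linj h2 δ hspan, ?_, ?_⟩
  · rw [hsr, range_set h2 δ]
  · intro a b
    exact (Lmap δ).map_add a b
  · rw [hsr]
    exact (LinearEquiv.ofInjective (Lmap δ) (Linj h2 δ hspan)).rank_eq.symm
end

section
/- Assume the characteristic of F is different from 3. Then the odd derivations of the Kantor double superalgebra K = Z ⊕ Zx are exactly the maps η_a for a ∈ Z, where η_a(f) = 0 and η_a(fx) = fa for f ∈ Z; moreover every η_a is inner: if a = Σᵢ gᵢδ(fᵢ) then η_a = Σᵢ D(fᵢ, gᵢx). Hence Der(K)₁ = Inder(K)₁ = {η_a : a ∈ Z}, which is F-linearly isomorphic to Z via a ↦ η_a. -/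
/-!
An odd derivation `d` of `K` has the form `d(f + gx) = ψ(g) + φ(f)x`, where `φ` is a derivation
of `Z` and `ψ(g) = φ(δ(g)) + gψ(1)`. Expanding `d((fg)x)` in two ways shows that `φ` commutes
with `δ` and that `δ(f)φ(g) + 2φ(f)δ(g) = 0`; symmetrizing gives `3φ(f)δ(g) = 0`, so `φ(f)`
annihilates `Zδ(Z) = Z`, whence `φ = 0` and `d = η_{ψ(1)}`. Conversely `D(f, gx) = η_{gδ(f)}`,
so `Zδ(Z) = Z` makes every `η_a` inner.
-/

namespace CKJ

lemma eq_zero_of_forall_mul_eq_zero {F Z : Type*} [Field F] [CommRing Z] [Algebra F Z]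
    {s : Set Z} (hs : Submodule.span F s = ⊤) {x : Z} (hx : ∀ z ∈ s, x * z = 0) : x = 0 := by
  have hker : Submodule.span F s ≤ LinearMap.ker (LinearMap.mulLeft F x) := Submodule.span_le.2 hx
  rw [hs] at hker
  simpa using hker (Submodule.mem_top (x := 1))

section Eta

variable {F : Type*} [Field F] {Z : Type*} [CommRing Z] [Algebra F Z]

variable (F Z) in
def ketaLinearMap : Z →ₗ[F] (Z × Z → Z × Z) where
  toFun := keta
  map_add' a b := by funext u; simp [keta, add_mul]
  map_smul' c a := by funext u; simp [keta]

@[simp]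
lemma ketaLinearMap_apply (a : Z) : ketaLinearMap F Z a = keta a := rfl

lemma keta_injective : Function.Injective (keta (Z := Z)) := by
  intro a b h
  simpa [keta] using congrFun h (0, 1)

lemma Dk_even_odd (δ : Derivation F Z Z) (f g : Z) :
    Dk (⇑δ) 1 (f, 0) (0, g) = keta (g * δ f) := by
  funext ⟨h, k⟩
  simp only [Dk, kmul, keta, one_smul, map_zero, Derivation.leibniz, smul_eq_mul, mul_zero,
    zero_mul, add_zero, zero_add, sub_zero, Prod.mk_sub_mk, Prod.mk.injEq]
  constructor <;> ring

lemma Dk_odd_even (δ : Derivation F Z Z) (f g : Z) :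
    Dk (⇑δ) 1 (0, g) (f, 0) = keta (-(g * δ f)) := by
  rw [← ketaLinearMap_apply (F := F), map_neg, ketaLinearMap_apply, ← Dk_even_odd]
  funext c
  simp [Dk]

lemma keta_isKDer1 (δ : Derivation F Z Z) (a : Z) : IsKDer1 F (⇑δ) (keta a) := by
  refine ⟨⟨fun u v => ?_, fun c u => ?_⟩, fun u hu => ?_, fun _ _ => rfl, fun u v => ?_⟩
  · simp [keta, mul_add]
  · simp [keta]
  · simp [keta, hu]
  · simp only [keta, kmul, ksig, map_zero, Prod.mk_add_mk, Prod.mk.injEq]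
    constructor <;> ring

theorem span_InderKSet1_eq_range_keta (δ : Derivation F Z Z)
    (hspan : Submodule.span F {z : Z | ∃ f g : Z, z = f * δ g} = ⊤) :
    Submodule.span F (InderKSet1 (⇑δ)) = LinearMap.range (ketaLinearMap F Z) := by
  apply le_antisymm
  · rw [Submodule.span_le]
    rintro _ ⟨⟨u₁, u₂⟩, ⟨v₁, v₂⟩, p, hu, hv, rfl⟩
    cases p with
    | false =>
      obtain rfl : u₂ = 0 := hu
      obtain rfl : v₁ = 0 := hv
      exact ⟨v₂ * δ u₁, (Dk_even_odd δ u₁ v₂).symm⟩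
    | true =>
      obtain rfl : u₁ = 0 := hu
      obtain rfl : v₂ = 0 := hv
      exact ⟨-(u₂ * δ v₁), (Dk_odd_even δ v₁ u₂).symm⟩
  · rw [LinearMap.range_eq_map, ← hspan, Submodule.map_span, Submodule.span_le]
    rintro _ ⟨_, ⟨f, g, rfl⟩, rfl⟩
    exact Submodule.subset_span ⟨(g, 0), (0, f), false, rfl, rfl, (Dk_even_odd δ g f).symm⟩

end Eta

namespace IsKDer1

variable {F : Type*} [Field F] {Z : Type*} [CommRing Z] [Algebra F Z]
  {d : Z × Z → Z × Z}

lemma apply_eq {δ : Z → Z} (hd : IsKDer1 F δ d) (u : Z × Z) :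
    d u = ((d (0, u.2)).1, (d (u.1, 0)).2) := by
  obtain ⟨⟨hadd, -⟩, heven, hodd, -⟩ := hd
  have hsplit : d u = d (u.1, 0) + d (0, u.2) := by rw [← hadd]; simp
  rw [hsplit]
  exact Prod.ext (by simp [heven (u.1, 0) rfl]) (by simp [hodd (0, u.2) rfl])

lemma map_kmul {δ : Z → Z} (hd : IsKDer1 F δ d) (u v : Z × Z) :
    d (kmul δ u v) = kmul δ (d u) v + kmul δ (ksig u) (d v) :=
  hd.2.2.2 u v

variable {δ : Derivation F Z Z}

lemma even_add (hd : IsKDer1 F (⇑δ) d) (f g : Z) :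
    (d (f + g, 0)).2 = (d (f, 0)).2 + (d (g, 0)).2 := by
  rw [← Prod.snd_add, ← hd.1.1, Prod.mk_add_mk, add_zero]

lemma even_mul (hd : IsKDer1 F (⇑δ) d) (f g : Z) :
    (d (f * g, 0)).2 = g * (d (f, 0)).2 + f * (d (g, 0)).2 := by
  have h := congrArg Prod.snd (hd.map_kmul (f, 0) (g, 0))
  rw [hd.apply_eq (f, 0), hd.apply_eq (g, 0)] at h
  simpa [kmul, ksig, add_comm] using h

lemma odd_eq (hd : IsKDer1 F (⇑δ) d) (f : Z) :
    (d (0, f)).1 = (d (δ f, 0)).2 + f * (d (0, 1)).1 := by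
  have h := congrArg Prod.snd (hd.map_kmul (0, f) (0, 1))
  rw [hd.apply_eq (0, f), hd.apply_eq (0, 1)] at h
  simp only [kmul, ksig, Prod.mk_add_mk, mul_zero, mul_one, zero_mul, zero_add, add_zero,
    sub_zero, Derivation.map_one_eq_zero, map_neg, neg_mul, mul_neg, sub_neg_eq_add] at h
  linear_combination -h

lemma odd_mul (hd : IsKDer1 F (⇑δ) d) (f g : Z) :
    (d (0, f * g)).1 = δ (d (f, 0)).2 * g - (d (f, 0)).2 * δ g + f * (d (0, g)).1 := by
  have h := congrArg Prod.fst (hd.map_kmul (f, 0) (0, g))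
  rw [hd.apply_eq (f, 0), hd.apply_eq (0, g)] at h
  simpa [kmul, ksig] using h

lemma even_one (hd : IsKDer1 F (⇑δ) d) : (d (1, 0)).2 = 0 := by
  have h := hd.even_mul 1 1
  rw [mul_one, one_mul] at h
  linear_combination -h

/-- Comparing the two expansions of `d((fg)x)` given by `odd_eq` and `odd_mul`. -/
lemma even_delta_relation (hd : IsKDer1 F (⇑δ) d) (f g : Z) :
    g * (d (δ f, 0)).2 + δ f * (d (g, 0)).2 + 2 * ((d (f, 0)).2 * δ g)
      = g * δ (d (f, 0)).2 := by
  have hδ : (d (δ (f * g), 0)).2 = δ g * (d (f, 0)).2 + f * (d (δ g, 0)).2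
      + (δ f * (d (g, 0)).2 + g * (d (δ f, 0)).2) := by
    rw [Derivation.leibniz, smul_eq_mul, smul_eq_mul, hd.even_add, hd.even_mul, hd.even_mul]
  linear_combination hd.odd_mul f g - hd.odd_eq (f * g) - hδ + f * hd.odd_eq g

lemma even_delta_comm (hd : IsKDer1 F (⇑δ) d) (f : Z) : (d (δ f, 0)).2 = δ (d (f, 0)).2 := by
  have h := hd.even_delta_relation f 1
  rw [hd.even_one, Derivation.map_one_eq_zero] at h
  linear_combination h

lemma three_mul_even_mul_delta (hd : IsKDer1 F (⇑δ) d) (f g : Z) :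
    3 * ((d (f, 0)).2 * δ g) = 0 := by
  have hfg := hd.even_delta_relation f g
  have hgf := hd.even_delta_relation g f
  rw [hd.even_delta_comm] at hfg hgf
  linear_combination 2 * hfg - hgf

lemma even_eq_zero (hd : IsKDer1 F (⇑δ) d) (h3 : (3 : F) ≠ 0)
    (hspan : Submodule.span F {z : Z | ∃ f g : Z, z = f * δ g} = ⊤) (f : Z) :
    (d (f, 0)).2 = 0 := by
  have h3Z : IsUnit (3 : Z) := by simpa only [map_ofNat] using h3.isUnit.map (algebraMap F Z)
  refine eq_zero_of_forall_mul_eq_zero hspan ?_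
  rintro _ ⟨u, v, rfl⟩
  have h := h3Z.mul_right_eq_zero.1 (hd.three_mul_even_mul_delta f v)
  linear_combination u * h

theorem eq_keta (hd : IsKDer1 F (⇑δ) d) (h3 : (3 : F) ≠ 0)
    (hspan : Submodule.span F {z : Z | ∃ f g : Z, z = f * δ g} = ⊤) :
    d = keta (d (0, 1)).1 := by
  funext u
  rw [hd.apply_eq u, hd.odd_eq, hd.even_eq_zero h3 hspan, hd.even_eq_zero h3 hspan]
  simp [keta, mul_comm]

end IsKDer1

end CKJ


open CKJ
theorem stmt6_general {F : Type*} [Field F] (h3 : (3 : F) ≠ 0)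
    {Z : Type*} [CommRing Z] [Algebra F Z]
    (δ : Derivation F Z Z)
    (hspan : Submodule.span F {z : Z | ∃ f g : Z, z = f * δ g} = ⊤) :
    -- the odd derivations of `K` are exactly the maps `η_a`, `a ∈ Z`
    ({d : Z × Z → Z × Z | IsKDer1 F (⇑δ) d} = {d | ∃ a : Z, d = keta a}) ∧
    -- `D(f, gx) = η_{gδ(f)}`
    (∀ f g : Z, Dk (⇑δ) 1 (f, (0 : Z)) ((0 : Z), g) = keta (g * δ f)) ∧
    -- if `a = Σᵢ gᵢ δ(fᵢ)` then `η_a = Σᵢ D(fᵢ, gᵢx)`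
    (∀ (n : ℕ) (fv gv : Fin n → Z) (a : Z), a = ∑ j, gv j * δ (fv j) →
      keta a = ∑ j, Dk (⇑δ) 1 (fv j, (0 : Z)) ((0 : Z), gv j)) ∧
    -- `Der(K)₁ = Inder(K)₁ = {η_a : a ∈ Z}`
    ((Submodule.span F (InderKSet1 (⇑δ)) : Set (Z × Z → Z × Z))
        = {d | ∃ a : Z, d = keta a}) ∧
    -- `a ↦ η_a` is an `F`-linear bijection of `Z` onto `Der(K)₁`
    Function.Injective (keta (Z := Z)) ∧
    (∀ a b : Z, keta (a + b) = keta a + keta b) ∧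
    (∀ (c : F) (a : Z), keta (c • a) = c • keta a) := by
  refine ⟨Set.ext fun d => ⟨fun hd => ⟨_, hd.eq_keta h3 hspan⟩, ?_⟩, Dk_even_odd δ, ?_, ?_,
    keta_injective, map_add (ketaLinearMap F Z), map_smul (ketaLinearMap F Z)⟩
  · rintro ⟨a, rfl⟩
    exact keta_isKDer1 δ a
  · rintro n fv gv a rfl
    simp only [Dk_even_odd]
    exact map_sum (ketaLinearMap F Z) _ _
  · rw [span_InderKSet1_eq_range_keta δ hspan, LinearMap.coe_range]
    exact Set.ext fun d => exists_congr fun a => eq_comm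

theorem stmt6 {F : Type*} [Field F] (h2 : (2 : F) ≠ 0) (h3 : (3 : F) ≠ 0)
    {Z : Type*} [CommRing Z] [Algebra F Z]
    (δ : Derivation F Z Z)
    (hspan : Submodule.span F {z : Z | ∃ f g : Z, z = f * δ g} = ⊤) :
    -- the odd derivations of `K` are exactly the maps `η_a`, `a ∈ Z`
    ({d : Z × Z → Z × Z | IsKDer1 F (⇑δ) d} = {d | ∃ a : Z, d = keta a}) ∧
    -- `D(f, gx) = η_{gδ(f)}`
    (∀ f g : Z, Dk (⇑δ) 1 (f, (0 : Z)) ((0 : Z), g) = keta (g * δ f)) ∧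
    -- if `a = Σᵢ gᵢ δ(fᵢ)` then `η_a = Σᵢ D(fᵢ, gᵢx)`
    (∀ (n : ℕ) (fv gv : Fin n → Z) (a : Z), a = ∑ j, gv j * δ (fv j) →
      keta a = ∑ j, Dk (⇑δ) 1 (fv j, (0 : Z)) ((0 : Z), gv j)) ∧
    -- `Der(K)₁ = Inder(K)₁ = {η_a : a ∈ Z}`
    ((Submodule.span F (InderKSet1 (⇑δ)) : Set (Z × Z → Z × Z))
        = {d | ∃ a : Z, d = keta a}) ∧
    -- `a ↦ η_a` is an `F`-linear bijection of `Z` onto `Der(K)₁`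
    Function.Injective (keta (Z := Z)) ∧
    (∀ a b : Z, keta (a + b) = keta a + keta b) ∧
    (∀ (c : F) (a : Z), keta (c • a) = c • keta a) :=
  stmt6_general h3 δ hspan
end

section
/- Let μ be an F-linear derivation of Z such that μ(f)δ(g) = δ(f)μ(g) for all f, g ∈ Z. Then there exists a ∈ Z with μ = aδ; explicitly, if 1 = Σᵢ aᵢδ(bᵢ) then μ = (Σᵢ aᵢμ(bᵢ))·δ. -/
open CKJ
theorem stmt8 {F : Type*} [Field F] (h2 : (2 : F) ≠ 0) {Z : Type*} [CommRing Z] [Algebra F Z]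
    (δ : Derivation F Z Z)
    (hspan : Submodule.span F {z : Z | ∃ f g : Z, z = f * δ g} = ⊤)
    (μ : Derivation F Z Z)
    (hμ : ∀ f g : Z, μ f * δ g = δ f * μ g) :
    (∃ a : Z, ∀ f, μ f = a * δ f) ∧
    ∀ (n : ℕ) (av bv : Fin n → Z), (∑ j, av j * δ (bv j)) = 1 →
      ∀ f, μ f = (∑ j, av j * μ (bv j)) * δ f := by
  have key : ∀ (n : ℕ) (av bv : Fin n → Z), (∑ j, av j * δ (bv j)) = 1 →
      ∀ f, μ f = (∑ j, av j * μ (bv j)) * δ f := by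
    intro n av bv h1 f
    calc μ f = (∑ j, av j * δ (bv j)) * μ f := by rw [h1, one_mul]
      _ = ∑ j, av j * (δ (bv j) * μ f) := by rw [Finset.sum_mul]; simp [mul_assoc]
      _ = ∑ j, av j * (μ (bv j) * δ f) := by
          refine Finset.sum_congr rfl fun j _ => ?_
          rw [hμ (bv j) f]
      _ = (∑ j, av j * μ (bv j)) * δ f := by rw [Finset.sum_mul]; simp [mul_assoc]
  refine ⟨?_, key⟩
  have h1 : (1 : Z) ∈ Submodule.span F {z : Z | ∃ f g : Z, z = f * δ g} := by
    rw [hspan]; trivial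
  obtain ⟨n, c, g, hg⟩ := Submodule.mem_span_set'.mp h1
  choose fv gv hfg using fun i => (g i).2
  refine ⟨∑ j, (c j • fv j) * μ (gv j), fun f => ?_⟩
  refine key n (fun j => c j • fv j) gv ?_ f
  rw [← hg]
  refine Finset.sum_congr rfl fun j _ => ?_
  rw [hfg j] at *
  simp [smul_mul_assoc, hfg j]
end

section
/- For the Cheng-Kac Jordan superalgebra J = JCK(Z,δ), the even part of the Lie superalgebra of inner derivations satisfies dim_F Inder(J)₀ = 4·dim_F Z = dim_F J₀. -/
open CKJ

namespace CKJP

variable {F : Type*} [Field F] {Z : Type*} [CommRing Z] [Algebra F Z]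

omit [CommRing Z] [Algebra F Z] in
theorem funext4 {Z : Type*} {f g : Fin 4 → Z} (h0 : f 0 = g 0) (h1 : f 1 = g 1)
    (h2 : f 2 = g 2) (h3 : f 3 = g 3) : f = g := by
  funext k; fin_cases k <;> assumption

/-- `psiF δ p = E_{p 0} + Σᵢ F_{p i, i}`, the general even inner derivation. -/
def psiF (δ : Z → Z) (p : Fin 4 → Z) : J Z → J Z := fun u =>
  (![-(2*(p 0)*δ (u.1 0)),
     -(2*(p 0)*δ (u.1 1)) + (p 2)*(u.1 3) - (p 3)*(u.1 2),
     -(2*(p 0)*δ (u.1 2)) + (p 3)*(u.1 1) - (p 1)*(u.1 3),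
     -(2*(p 0)*δ (u.1 3)) + (p 2)*(u.1 1) - (p 1)*(u.1 2)],
   ![δ (p 0)*(u.2 0) - 2*(p 0)*δ (u.2 0),
     δ (p 1)*(u.2 0) - δ (p 0)*(u.2 1) - 2*(p 0)*δ (u.2 1) + (p 2)*(u.2 3) - (p 3)*(u.2 2),
     δ (p 2)*(u.2 0) - δ (p 0)*(u.2 2) - 2*(p 0)*δ (u.2 2) + (p 3)*(u.2 1) - (p 1)*(u.2 3),
     δ (p 3)*(u.2 0) - δ (p 0)*(u.2 3) - 2*(p 0)*δ (u.2 3) + (p 2)*(u.2 1) - (p 1)*(u.2 2)])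

set_option maxHeartbeats 1000000 in
theorem dgen_oddodd (δ : Derivation F Z Z) (b d : Fin 4 → Z) :
    Dgen (⇑δ) (-1) ((0 : Fin 4 → Z), b) ((0 : Fin 4 → Z), d) =
      psiF (⇑δ) ![b 0 * d 0, b 0 * d 1 + b 1 * d 0, b 0 * d 2 + b 2 * d 0,
        b 0 * d 3 + b 3 * d 0] := by
  funext c
  refine Prod.ext (funext4 ?_ ?_ ?_ ?_) (funext4 ?_ ?_ ?_ ?_) <;>
    simp only [Dgen, jmul, emul, omul, eomul, psiF,
      Prod.fst_sub, Prod.snd_sub, Prod.fst_add, Prod.snd_add, Prod.mk_add_mk,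
      Prod.smul_fst, Prod.smul_snd,
      Pi.add_apply, Pi.sub_apply, Pi.smul_apply, Pi.zero_apply, Pi.neg_apply,
      neg_one_zsmul,
      Matrix.cons_val_zero, Matrix.cons_val_one, Matrix.head_cons,
      Matrix.cons_val_two, Matrix.tail_cons, Matrix.cons_val_three,
      Fin.isValue, map_zero, map_add, map_sub, Derivation.leibniz, smul_eq_mul,
      zero_mul, mul_zero, zero_add, add_zero, zero_sub, sub_zero, neg_neg, sub_neg_eq_add] <;>
    ring

set_option maxHeartbeats 1000000 in
theorem dgen_eveneven (δ : Derivation F Z Z) (a c : Fin 4 → Z) :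
    Dgen (⇑δ) 1 (a, (0 : Fin 4 → Z)) (c, (0 : Fin 4 → Z)) =
      psiF (⇑δ) ![0, a 2 * c 3 - a 3 * c 2, a 3 * c 1 - a 1 * c 3, a 2 * c 1 - a 1 * c 2] := by
  funext u
  refine Prod.ext (funext4 ?_ ?_ ?_ ?_) (funext4 ?_ ?_ ?_ ?_) <;>
    simp only [Dgen, jmul, emul, omul, eomul, psiF,
      Prod.fst_sub, Prod.snd_sub, Prod.fst_add, Prod.snd_add, Prod.mk_add_mk,
      Prod.smul_fst, Prod.smul_snd,
      Pi.add_apply, Pi.sub_apply, Pi.smul_apply, Pi.zero_apply, Pi.neg_apply,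
      one_smul,
      Matrix.cons_val_zero, Matrix.cons_val_one, Matrix.head_cons,
      Matrix.cons_val_two, Matrix.tail_cons, Matrix.cons_val_three,
      Fin.isValue, map_zero, map_add, map_sub, Derivation.leibniz, smul_eq_mul,
      zero_mul, mul_zero, zero_add, add_zero, zero_sub, sub_zero, neg_neg, sub_neg_eq_add] <;>
    ring

/-- `psiF` as an `F`-linear map. -/
def psiL (δ : Derivation F Z Z) : (Fin 4 → Z) →ₗ[F] (J Z → J Z) where
  toFun := psiF ⇑δ
  map_add' p q := by
    funext u
    refine Prod.ext (funext4 ?_ ?_ ?_ ?_) (funext4 ?_ ?_ ?_ ?_) <;>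
      simp only [psiF, Pi.add_apply, Prod.fst_add, Prod.snd_add, map_add,
        Matrix.cons_val_zero, Matrix.cons_val_one, Matrix.head_cons,
        Matrix.cons_val_two, Matrix.tail_cons, Matrix.cons_val_three, Fin.isValue] <;>
      ring
  map_smul' c p := by
    funext u
    refine Prod.ext (funext4 ?_ ?_ ?_ ?_) (funext4 ?_ ?_ ?_ ?_) <;>
      (simp only [psiF, RingHom.id_apply, Pi.smul_apply, Prod.smul_fst, Prod.smul_snd,
        Matrix.cons_val_zero, Matrix.cons_val_one, Matrix.head_cons,
        Matrix.cons_val_two, Matrix.tail_cons, Matrix.cons_val_three, Fin.isValue];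
       (try simp only [map_smul, Derivation.map_smul]);
       (try simp only [Algebra.smul_def]);
       ring)

theorem psiL_apply (δ : Derivation F Z Z) (p : Fin 4 → Z) : psiL (F := F) δ p = psiF ⇑δ p := rfl

theorem dgen_single (δ : Derivation F Z Z) (a : Z) (k : Fin 4) :
    Dgen (⇑δ) (-1) (fxi a 0) (fxi (1 : Z) k) = psiL (F := F) δ (Pi.single k a) := by
  rw [psiL_apply]
  show Dgen (⇑δ) (-1) ((0 : Fin 4 → Z), fun j => if j = 0 then a else 0)
      ((0 : Fin 4 → Z), fun j => if j = k then 1 else 0) = _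
  rw [dgen_oddodd δ]
  exact congrArg (psiF ⇑δ) (funext4
    (by simp [Pi.single_apply, mul_ite, mul_one, mul_zero])
    (by simp [Pi.single_apply, mul_ite, mul_one, mul_zero])
    (by simp [Pi.single_apply, mul_ite, mul_one, mul_zero])
    (by simp [Pi.single_apply, mul_ite, mul_one, mul_zero]))

theorem span_eq (δ : Derivation F Z Z) :
    Submodule.span F (InderSet0 (⇑δ)) = LinearMap.range (psiL (F := F) δ) := by
  apply le_antisymm
  · rw [Submodule.span_le]
    rintro d ⟨u, v, p, hu, hv, rfl⟩
    obtain ⟨u1, u2⟩ := u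
    obtain ⟨v1, v2⟩ := v
    cases p
    · simp only [IsHom, if_neg (by simp : ¬ (false = true))] at hu hv
      have hs : sgn false false = 1 := rfl
      subst hu; subst hv
      rw [hs, dgen_eveneven δ u1 v1]
      exact ⟨_, psiL_apply δ _⟩
    · simp only [IsHom, if_pos rfl] at hu hv
      have hs : sgn true true = -1 := rfl
      subst hu; subst hv
      rw [hs, dgen_oddodd δ u2 v2]
      exact ⟨_, psiL_apply δ _⟩
  · rintro d ⟨p, rfl⟩
    have hsum : (psiL (F := F) δ) p = ∑ k : Fin 4, (psiL (F := F) δ) (Pi.single k (p k)) := by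
      rw [← map_sum, Finset.univ_sum_single]
    rw [hsum]
    refine Submodule.sum_mem _ fun k _ => Submodule.subset_span ?_
    refine ⟨fxi (p k) 0, fxi 1 k, true, rfl, rfl, ?_⟩
    have hs : sgn true true = -1 := rfl
    rw [hs, dgen_single δ (p k) k]

theorem psiL_injective (h2 : (2 : F) ≠ 0) (δ : Derivation F Z Z)
    (hspan : Submodule.span F {z : Z | ∃ f g : Z, z = f * δ g} = ⊤) :
    Function.Injective (psiL (F := F) δ) := by
  rw [← LinearMap.ker_eq_bot, LinearMap.ker_eq_bot']
  intro p hp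
  have hp' : psiF ⇑δ p = 0 := hp
  have h3 : p 3 = 0 := by
    have := congrFun (congrArg Prod.fst (congrFun hp' (fw (1 : Z) 1))) 2
    simpa [psiF, fw] using this
  have hv2 : p 2 = 0 := by
    have := congrFun (congrArg Prod.fst (congrFun hp' (fw (1 : Z) 1))) 3
    simpa [psiF, fw] using this
  have h1 : p 1 = 0 := by
    have := congrFun (congrArg Prod.fst (congrFun hp' (fw (1 : Z) 2))) 3
    simpa [psiF, fw] using this
  have key : ∀ z : Z, p 0 * δ z = 0 := by
    intro z
    have h := congrFun (congrArg Prod.fst (congrFun hp' (fw z 0))) 0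
    simp only [psiF, fw, Pi.zero_apply, Prod.fst_zero, if_pos rfl,
      Matrix.cons_val_zero, neg_eq_zero] at h
    have h2' : (2 : F) • (p 0 * δ z) = 0 := by
      rw [Algebra.smul_def]
      calc algebraMap F Z 2 * (p 0 * δ z) = 2 * p 0 * δ z := by
            rw [map_ofNat]; ring
        _ = 0 := h
    have := congrArg (fun t => (2 : F)⁻¹ • t) h2'
    simpa [smul_smul, inv_mul_cancel₀ h2] using this
  have h0 : p 0 = 0 := by
    have hL : LinearMap.mulLeft F (p 0) = (0 : Z →ₗ[F] Z) := by
      apply LinearMap.ext_on hspan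
      rintro z ⟨f, g, rfl⟩
      simp only [LinearMap.mulLeft_apply, LinearMap.zero_apply]
      calc p 0 * (f * δ g) = f * (p 0 * δ g) := by ring
        _ = 0 := by rw [key g, mul_zero]
    have := congrFun (congrArg (fun L : Z →ₗ[F] Z => (L : Z → Z)) hL) 1
    simpa using this
  exact funext4 h0 h1 hv2 h3

end CKJP

open CKJ
theorem stmt10 {F : Type*} [Field F] (h2 : (2 : F) ≠ 0) {Z : Type*} [CommRing Z] [Algebra F Z]
    (δ : Derivation F Z Z)
    (hspan : Submodule.span F {z : Z | ∃ f g : Z, z = f * δ g} = ⊤) :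
    -- dim_F Inder(J)₀ = 4 · dim_F Z = dim_F J₀
    Module.rank F ↥(Submodule.span F (InderSet0 (⇑δ))) = 4 * Module.rank F Z ∧
    Module.rank F (Fin 4 → Z) = 4 * Module.rank F Z := by
  have hrank2 : Module.rank F (Fin 4 → Z) = 4 * Module.rank F Z := by
    rw [rank_fun_eq_lift_mul, Cardinal.lift_uzero]
    simp
  refine ⟨?_, hrank2⟩
  rw [CKJP.span_eq δ]
  have hinj := CKJP.psiL_injective h2 δ hspan
  have he := (LinearEquiv.ofInjective (CKJP.psiL (F := F) δ) hinj).rank_eq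
  rw [← he, hrank2]
end
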